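/- arXiv:2503.16697 — 2 statements merged into one kernel-verified Lean document; each statement's English description precedes it below -/
import Mathlib

section
/- Let k be a field of prime characteristic p, let P be a finite p-group, and let E be a finite group of order prime to p acting on P by automorphisms with [P,E] = P; let e be an element of the centre Z(E). Inside the group algebra k(P⋊E), the subspace kP·e (the k-span of the elements ue, u ∈ P) is an E-stable kP-kP-sub-bimodule which is a direct summand of k(P⋊E) as a kP-kP-bimodule, and every E-stable k-linear map f : kP → kP·e satisfying the Leibniz rule f(ab) = f(a)b + a f(b) for all a,b ∈ kP (products taken in k(P⋊E)) has image contained in J(kP)·e. -/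
namespace HHPaper

open MonoidAlgebra

attribute [local instance] LieRing.ofAssociativeRing

section Derivations

variable {k A : Type*} [CommRing k] [Ring A] [Algebra k A]

/-- `f` is a derivation on the associative unital `k`-algebra `A`. -/
def IsDerivation (f : Module.End k A) : Prop :=
  ∀ a b : A, f (a * b) = f a * b + a * f b

lemma IsDerivation.add {f g : Module.End k A} (hf : IsDerivation f) (hg : IsDerivation g) :
    IsDerivation (f + g) := by
  intro a b
  simp only [LinearMap.add_apply, hf a b, hg a b, add_mul, mul_add]
  abel

lemma IsDerivation.zero : IsDerivation (0 : Module.End k A) := by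
  intro a b; simp

lemma IsDerivation.smul (c : k) {f : Module.End k A} (hf : IsDerivation f) :
    IsDerivation (c • f) := by
  intro a b
  simp only [LinearMap.smul_apply, hf a b, smul_add, smul_mul_assoc, mul_smul_comm]

lemma IsDerivation.lie {f g : Module.End k A} (hf : IsDerivation f) (hg : IsDerivation g) :
    IsDerivation ⁅f, g⁆ := by
  intro a b
  simp only [Ring.lie_def, LinearMap.sub_apply, Module.End.mul_apply]
  rw [hg a b, hf a b, map_add, map_add, hf (g a) b, hf a (g b), hg (f a) b, hg a (f b)]
  simp only [sub_mul, mul_sub, add_mul, mul_add]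
  abel

variable (k A) in
/-- The Lie algebra of derivations on `A`, as a Lie subalgebra of `Module.End k A`. -/
def derivLie : LieSubalgebra k (Module.End k A) where
  carrier := {f | IsDerivation f}
  add_mem' := fun hf hg => hf.add hg
  zero_mem' := IsDerivation.zero
  smul_mem' := fun c _ hf => hf.smul c
  lie_mem' := fun hf hg => hf.lie hg

@[simp] lemma mem_derivLie {f : Module.End k A} :
    f ∈ derivLie k A ↔ IsDerivation f := Iff.rfl

variable (k) in
/-- The inner derivation `[c, -]` associated with `c : A`. -/
def innerDeriv (c : A) : Module.End k A :=
  LinearMap.mulLeft k c - LinearMap.mulRight k c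

@[simp] lemma innerDeriv_apply (c a : A) : innerDeriv k c a = c * a - a * c := rfl

lemma innerDeriv_isDerivation (c : A) : IsDerivation (innerDeriv k c) := by
  intro a b
  simp only [innerDeriv_apply, sub_mul, mul_sub, mul_assoc]
  abel

lemma innerDeriv_add (c d : A) :
    innerDeriv k (c + d) = innerDeriv k c + innerDeriv k d := by
  ext a; simp only [innerDeriv_apply, LinearMap.add_apply, add_mul, mul_add]; abel

lemma innerDeriv_smul (s : k) (c : A) :
    innerDeriv k (s • c) = s • innerDeriv k c := by
  ext a
  simp only [innerDeriv_apply, LinearMap.smul_apply, smul_sub, smul_mul_assoc, mul_smul_comm]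

lemma innerDeriv_zero : innerDeriv k (0 : A) = 0 := by
  ext a; simp

variable (k A) in
/-- The Lie ideal of inner derivations inside the Lie algebra of derivations. -/
def innerIdeal : LieIdeal k (derivLie k A) where
  carrier := {f | ∃ c : A, (f : Module.End k A) = innerDeriv k c}
  add_mem' := by
    rintro f g ⟨c, hc⟩ ⟨d, hd⟩
    exact ⟨c + d, by simp [innerDeriv_add, hc, hd]⟩
  zero_mem' := ⟨0, by simp [innerDeriv_zero]⟩
  smul_mem' := by
    rintro s f ⟨c, hc⟩
    exact ⟨s • c, by rw [innerDeriv_smul]; rw [← hc]; rfl⟩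
  lie_mem := by
    rintro x m ⟨c, hc⟩
    refine ⟨(x : Module.End k A) c, ?_⟩
    have hx : IsDerivation (x : Module.End k A) := x.2
    ext a
    have hb : ((⁅x, m⁆ : derivLie k A) : Module.End k A) =
        ⁅(x : Module.End k A), (m : Module.End k A)⁆ := rfl
    rw [hb, hc]
    simp only [Ring.lie_def, LinearMap.sub_apply, Module.End.mul_apply, innerDeriv_apply,
      map_sub, hx c a, hx a c]
    abel

variable (k A) in
/-- First Hochschild cohomology of `A`, as the quotient Lie algebra of derivations
modulo inner derivations. -/
abbrev HH1 := (derivLie k A) ⧸ (innerIdeal k A)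

variable (k A) in
/-- The Jacobson radical of `A`, regarded as a `k`-subspace of `A`. -/
def jacRad : Submodule k A :=
  Submodule.restrictScalars k (Ideal.jacobson (⊥ : Ideal A))

variable (k A) in
/-- The Lie subalgebra of derivations with image contained in the `m`-th power of
the Jacobson radical. -/
def derivRadLie (m : ℕ) : LieSubalgebra k (Module.End k A) where
  carrier := {f | IsDerivation f ∧ LinearMap.range f ≤ (jacRad k A) ^ m}
  add_mem' := by
    rintro f g ⟨hf, hf'⟩ ⟨hg, hg'⟩
    refine ⟨hf.add hg, ?_⟩
    rintro x ⟨a, rfl⟩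
    exact add_mem (hf' ⟨a, rfl⟩) (hg' ⟨a, rfl⟩)
  zero_mem' := ⟨IsDerivation.zero, by rintro x ⟨a, rfl⟩; simp⟩
  smul_mem' := by
    rintro s f ⟨hf, hf'⟩
    refine ⟨hf.smul s, ?_⟩
    rintro x ⟨a, rfl⟩
    exact Submodule.smul_mem _ s (hf' ⟨a, rfl⟩)
  lie_mem' := by
    rintro f g ⟨hf, hf'⟩ ⟨hg, hg'⟩
    refine ⟨hf.lie hg, ?_⟩
    rintro x ⟨a, rfl⟩
    have : ⁅f, g⁆ a = f (g a) - g (f a) := by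
      simp [Ring.lie_def, Module.End.mul_apply]
    rw [this]
    exact sub_mem (hf' ⟨g a, rfl⟩) (hg' ⟨f a, rfl⟩)

@[simp] lemma mem_derivRadLie {m : ℕ} {f : Module.End k A} :
    f ∈ derivRadLie k A m ↔ IsDerivation f ∧ LinearMap.range f ≤ (jacRad k A) ^ m := Iff.rfl

variable (k A) in
/-- The Loewy length of `A`: the least positive `n` with `J(A)^n = 0`. -/
noncomputable def loewyLength : ℕ :=
  sInf {n : ℕ | 0 < n ∧ (jacRad k A) ^ n = ⊥}

/-- A semisimple-style multiplicity freeness: any two isomorphic simple submodules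
coincide. -/
def IsMultiplicityFree (R M : Type*) [Ring R] [AddCommGroup M] [Module R M] : Prop :=
  ∀ S T : Submodule R M, IsSimpleModule R S → IsSimpleModule R T →
    Nonempty (S ≃ₗ[R] T) → S = T

end Derivations


section GroupAlgebra

open MonoidAlgebra

variable (k : Type*) [CommRing k] {P E : Type*} [Group P] [Group E]

/-- The subgroup `[P,E]` generated by the elements `(ᵉu)u⁻¹`. -/
def commSubgroupE (φ : E →* MulAut P) : Subgroup P :=
  Subgroup.closure {x : P | ∃ (e : E) (u : P), x = φ e u * u⁻¹}

/-- A linear endomorphism of `kP` is `E`-stable if it commutes with the `E`-action. -/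
def IsEStable (φ : E →* MulAut P) (f : Module.End k (MonoidAlgebra k P)) : Prop :=
  ∀ (e : E) (a : MonoidAlgebra k P),
    f (MonoidAlgebra.domCongr k k (φ e) a) = MonoidAlgebra.domCongr k k (φ e) (f a)

/-- The Lie algebra `Der(kP)^E` of `E`-stable derivations on the group algebra `kP`. -/
def eStableDerivLie (φ : E →* MulAut P) :
    LieSubalgebra k (Module.End k (MonoidAlgebra k P)) where
  carrier := {f | IsDerivation f ∧ IsEStable k φ f}
  add_mem' := by
    rintro f g ⟨hf, hf'⟩ ⟨hg, hg'⟩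
    exact ⟨hf.add hg, fun e a => by simp [LinearMap.add_apply, hf' e a, hg' e a]⟩
  zero_mem' := ⟨IsDerivation.zero, fun e a => by simp⟩
  smul_mem' := by
    rintro s f ⟨hf, hf'⟩
    refine ⟨hf.smul s, fun e a => ?_⟩
    simp only [LinearMap.smul_apply, hf' e a, map_smul]
  lie_mem' := by
    rintro f g ⟨hf, hf'⟩ ⟨hg, hg'⟩
    refine ⟨hf.lie hg, fun e a => ?_⟩
    simp only [Ring.lie_def, LinearMap.sub_apply, Module.End.mul_apply, hf' e, hg' e, map_sub]

@[simp] lemma mem_eStableDerivLie {φ : E →* MulAut P} {f : Module.End k (MonoidAlgebra k P)} :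
    f ∈ eStableDerivLie k φ ↔ IsDerivation f ∧ IsEStable k φ f := Iff.rfl

end GroupAlgebra

section Commutant

variable (k : Type*) [CommRing k] {Q : Type*} [AddCommGroup Q] [Module k Q]
  {E : Type*} [Group E]

/-- The Lie subalgebra of `Module.End k Q` of endomorphisms commuting with a given
`E`-action, i.e. `End_{kE}(Q)`. -/
def commutantLie (ρ : E →* (Q ≃ₗ[k] Q)) : LieSubalgebra k (Module.End k Q) where
  carrier := {g | ∀ (e : E) (x : Q), g (ρ e x) = ρ e (g x)}
  add_mem' := by
    intro f g hf hg e x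
    simp [LinearMap.add_apply, hf e x, hg e x]
  zero_mem' := by intro e x; simp
  smul_mem' := by
    intro s f hf e x
    simp [LinearMap.smul_apply, hf e x]
  lie_mem' := by
    intro f g hf hg e x
    simp only [Ring.lie_def, LinearMap.sub_apply, Module.End.mul_apply, hf e, hg e, map_sub]

end Commutant

section SDP

open SemidirectProduct

variable (k : Type*) [CommRing k] {P E : Type*} [Group P] [Group E] (φ : E →* MulAut P)

/-- The canonical embedding of `kP` into `k(P⋊E)`. -/
noncomputable abbrev iotaP : MonoidAlgebra k P →ₐ[k] MonoidAlgebra k (P ⋊[φ] E) :=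
  MonoidAlgebra.mapDomainAlgHom k k (SemidirectProduct.inl : P →* P ⋊[φ] E)

/-- Conjugation by `e ∈ E` on `k(P⋊E)`. -/
noncomputable def conjE (e : E) (x : MonoidAlgebra k (P ⋊[φ] E)) :
    MonoidAlgebra k (P ⋊[φ] E) :=
  MonoidAlgebra.single (inr e : P ⋊[φ] E) 1 * x * MonoidAlgebra.single (inr e⁻¹ : P ⋊[φ] E) 1

/-- The `k`-span `kP·e` of the elements `ue`, `u ∈ P`, inside `k(P⋊E)`. -/
noncomputable def kPe (e : E) : Submodule k (MonoidAlgebra k (P ⋊[φ] E)) :=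
  Submodule.span k {x | ∃ u : P, x = MonoidAlgebra.single ((inl u : P ⋊[φ] E) * inr e) 1}

end SDP

/-!
Inside `k(P⋊E)`, `kP·e` is the span of the coset `P·e`, and `k(P⋊E)` is the direct sum of the
spans of the cosets `P·e'`, each stable under multiplication by `P` on both sides; conjugation by
`E` preserves the coset `P·e` because `e` is central.

For the derivation, compose `f` with the augmentation `ψ` of `k(P⋊E)`: the Leibniz rule makes
`u ↦ ψ (f u)` a homomorphism `P → (k, +)`, and `E`-stability makes it `E`-invariant, so it kills
`[P,E] = P`. Writing `f a = b·e`, the augmentation of `b` is `ψ (f a) = 0`. Finally the augmentation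
ideal of `kP` lies in `J(kP)`: a simple `kP`-module is an `𝔽_p`-space, so the `p`-group `P` fixes
a nonzero vector in it; that vector generates the module and is killed by the augmentation ideal.
-/

theorem _root_.IsPGroup.exists_fixed_ne_zero {p : ℕ} [Fact p.Prime] {P : Type*} [Group P]
    [Finite P] (hP : IsPGroup p P) {S : Type*} [AddCommGroup S] [Module (ZMod p) S]
    [DistribMulAction P S] {v₀ : S} (hv₀ : v₀ ≠ 0) : ∃ v : S, v ≠ 0 ∧ ∀ u : P, u • v = v := by
  -- `P` acts on the `𝔽_p`-span of the orbit of `v₀`, a set of `p`-power order fixing `0`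
  let V : Submodule (ZMod p) S := Submodule.span (ZMod p) (Set.range fun u : P => u • v₀)
  have hV : ∀ (u : P) (x : S), x ∈ V → u • x ∈ V := by
    intro u x hx
    induction hx using Submodule.span_induction with
    | mem x hx =>
      obtain ⟨w, rfl⟩ := hx
      exact Submodule.subset_span ⟨u * w, mul_smul u w v₀⟩
    | zero => rw [smul_zero]; exact V.zero_mem
    | add x y _ _ hx hy => rw [smul_add]; exact V.add_mem hx hy
    | smul c x _ hx =>
      rw [← DistribMulAction.toAddMonoidHom_apply, ZMod.map_smul]
      exact V.smul_mem c hx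
  let _ : MulAction P V :=
    { smul := fun u x => ⟨u • (x : S), hV u x x.2⟩
      one_smul := fun x => Subtype.ext (one_smul P (x : S))
      mul_smul := fun u w x => Subtype.ext (mul_smul u w (x : S)) }
  have _ : Module.Finite (ZMod p) V := Module.Finite.span_of_finite _ (Set.finite_range _)
  have _ : Finite V := Module.finite_of_finite (ZMod p)
  have _ : Nontrivial V :=
    ⟨⟨⟨v₀, Submodule.subset_span ⟨1, one_smul P v₀⟩⟩, 0, by simpa using hv₀⟩⟩
  have hcard : p ∣ Nat.card V := by
    rw [Module.natCard_eq_pow_finrank (K := ZMod p), Nat.card_zmod]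
    exact dvd_pow_self p Module.finrank_pos.ne'
  obtain ⟨v, hv, hv0⟩ := hP.exists_fixed_point_of_prime_dvd_card_of_fixed_point V hcard
    (a := 0) fun u => Subtype.ext (smul_zero u)
  exact ⟨v, fun h => hv0 (Subtype.ext h.symm), fun u => congrArg Subtype.val (hv u)⟩

section Augmentation

variable {k : Type*} [CommRing k]

theorem smul_eq_lift_one_smul_of_forall_of_smul_eq {G : Type*} [Monoid G] {S : Type*}
    [AddCommGroup S] [Module (MonoidAlgebra k G) S] [Module k S]
    [IsScalarTower k (MonoidAlgebra k G) S] {v : S} (hv : ∀ g, of k G g • v = v)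
    (a : MonoidAlgebra k G) : a • v = MonoidAlgebra.lift k k G 1 a • v := by
  induction a using MonoidAlgebra.induction_linear with
  | zero => simp
  | add a b ha hb => rw [add_smul, ha, hb, map_add, add_smul]
  | single g c =>
    rw [← mul_one c, ← smul_single', smul_assoc, ← of_apply, hv, map_smul, lift_of]
    simp

theorem mem_jacobson_of_lift_one_eq_zero {p : ℕ} [Fact p.Prime] [CharP k p] {P : Type*}
    [Group P] [Finite P] (hP : IsPGroup p P) {a : MonoidAlgebra k P}
    (ha : MonoidAlgebra.lift k k P 1 a = 0) :
    a ∈ Ideal.jacobson (⊥ : Ideal (MonoidAlgebra k P)) := by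
  refine Submodule.mem_sInf.mpr ?_
  rintro m ⟨-, hm⟩
  let S := MonoidAlgebra k P ⧸ m
  have _ : IsSimpleModule (MonoidAlgebra k P) S := isSimpleModule_iff_isCoatom.mpr hm.out
  let _ : Module (ZMod p) S := Module.compHom S (ZMod.castHom dvd_rfl k)
  let _ : DistribMulAction P S := DistribMulAction.compHom S (of k P)
  obtain ⟨v, hv, hfix⟩ := hP.exists_fixed_ne_zero (S := S) (v₀ := Submodule.Quotient.mk 1)
    fun h => hm.ne_top ((Ideal.eq_top_iff_one m).mpr ((Submodule.Quotient.mk_eq_zero m).mp h))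
  obtain ⟨b, hb⟩ := Submodule.mem_span_singleton.mp
    ((IsSimpleModule.span_singleton_eq_top (MonoidAlgebra k P) hv).ge Submodule.mem_top :
      Submodule.Quotient.mk (1 : MonoidAlgebra k P) ∈ Submodule.span _ {v})
  refine (Submodule.Quotient.mk_eq_zero m).mp ?_
  rw [← mul_one a, ← smul_eq_mul, Submodule.Quotient.mk_smul, ← hb, smul_smul,
    smul_eq_lift_one_smul_of_forall_of_smul_eq hfix, map_mul, ha, zero_mul, zero_smul]

end Augmentation

section Supported

open scoped Pointwise

variable {k : Type*} [CommRing k] {G : Type*}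

theorem mul_mem_supported [Mul G] {s t : Set G} {x y : MonoidAlgebra k G}
    (hx : x ∈ supported k k s) (hy : y ∈ supported k k t) : x * y ∈ supported k k (s * t) := by
  classical
  rw [mem_supported] at *
  exact (Finset.coe_subset.mpr (support_coeff_mul_subset x y)).trans
    (by rw [Finset.coe_mul]; exact Set.mul_subset_mul hx hy)

theorem single_mem_supported {s : Set G} {g : G} (hg : g ∈ s) (c : k) :
    single g c ∈ supported k k s := by
  classical
  rw [mem_supported]
  exact (Finset.coe_subset.mpr Finsupp.support_single_subset).trans (by simpa using hg)

theorem isCompl_supported_compl (s : Set G) : IsCompl (supported k k s) (supported k k sᶜ) := by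
  rw [supported_eq_map, supported_eq_map]
  refine (Submodule.orderIsoMapComap (coeffLinearEquiv (S := k) (M := G) k).symm).isCompl ?_
  constructor
  · exact Finsupp.disjoint_supported_supported disjoint_compl_right
  · rw [codisjoint_iff, ← Finsupp.supported_union, Set.union_compl_self, Finsupp.supported_univ]

end Supported

section SemidirectProduct

open SemidirectProduct

variable {k : Type*} [CommRing k] {P E : Type*} [Group P] [Group E] {φ : E →* MulAut P}

theorem iotaP_single (u : P) (c : k) : iotaP k φ (single u c) = single (inl u) c := by
  simp [mapDomain_single]

theorem iotaP_mem_supported_range_inl (a : MonoidAlgebra k P) :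
    iotaP k φ a ∈ supported k k (Set.range (inl : P → P ⋊[φ] E)) := by
  induction a using MonoidAlgebra.induction_linear with
  | zero => simp
  | add a b ha hb => rw [map_add]; exact add_mem ha hb
  | single u c => rw [iotaP_single]; exact single_mem_supported (Set.mem_range_self u) c

theorem exists_iotaP_eq_of_mem_supported_range_inl {x : MonoidAlgebra k (P ⋊[φ] E)}
    (hx : x ∈ supported k k (Set.range (inl : P → P ⋊[φ] E))) : ∃ b, iotaP k φ b = x :=
  ⟨comapDomain inl inl_injective x, mapDomain_comapDomain hx inl_injective⟩

theorem iotaP_mul_mem_and_mul_iotaP_mem_supported (S : Set E) (a : MonoidAlgebra k P)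
    {x : MonoidAlgebra k (P ⋊[φ] E)} (hx : x ∈ supported k k (rightHom ⁻¹' S)) :
    iotaP k φ a * x ∈ supported k k (rightHom ⁻¹' S) ∧
      x * iotaP k φ a ∈ supported k k (rightHom ⁻¹' S) := by
  constructor
  · refine supported_mono ?_ (mul_mem_supported (iotaP_mem_supported_range_inl a) hx)
    rintro _ ⟨_, ⟨u, rfl⟩, g, hg, rfl⟩
    simpa using hg
  · refine supported_mono ?_ (mul_mem_supported hx (iotaP_mem_supported_range_inl a))
    rintro _ ⟨g, hg, _, ⟨u, rfl⟩, rfl⟩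
    simpa using hg

theorem kPe_eq_supported (e : E) : kPe k φ e = supported k k (rightHom ⁻¹' {e}) := by
  rw [supported_eq_span_single, kPe]
  congr 1
  ext x
  constructor
  · rintro ⟨u, rfl⟩
    exact ⟨inl u * inr e, by simp, rfl⟩
  · rintro ⟨g, hg, rfl⟩
    refine ⟨g.left, ?_⟩
    rw [← (Set.mem_singleton_iff.mp hg : g.right = e), inl_left_mul_inr_right]

theorem conjE_mem_kPe {e : E} (he : e ∈ Subgroup.center E) (e' : E)
    {x : MonoidAlgebra k (P ⋊[φ] E)} (hx : x ∈ kPe k φ e) : conjE k φ e' x ∈ kPe k φ e := by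
  rw [kPe_eq_supported] at hx ⊢
  refine supported_mono ?_ (mul_mem_supported (mul_mem_supported
    (single_mem_supported (Set.mem_singleton (inr e')) 1) hx)
    (single_mem_supported (Set.mem_singleton (inr e'⁻¹)) 1))
  rintro _ ⟨_, ⟨_, rfl, g, hg, rfl⟩, _, rfl, rfl⟩
  simp only [Set.mem_preimage, Set.mem_singleton_iff, map_mul, rightHom_inr] at hg ⊢
  rw [hg, Subgroup.mem_center_iff.mp he e', mul_inv_cancel_right]

theorem exists_eq_iotaP_mul_of_mem_kPe {e : E} {x : MonoidAlgebra k (P ⋊[φ] E)}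
    (hx : x ∈ kPe k φ e) : ∃ b, x = iotaP k φ b * single (inr e) 1 := by
  rw [kPe_eq_supported] at hx
  have hxe : x * single (inr e⁻¹) 1 ∈ supported k k (Set.range (inl : P → P ⋊[φ] E)) := by
    refine supported_mono ?_
      (mul_mem_supported hx (single_mem_supported (Set.mem_singleton (inr e⁻¹)) (1 : k)))
    rintro _ ⟨g, hg, _, rfl, rfl⟩
    refine ⟨(g * inr e⁻¹).left, ?_⟩
    rw [← Set.mem_singleton_iff.mp hg]
    ext <;> simp
  obtain ⟨b, hb⟩ := exists_iotaP_eq_of_mem_supported_range_inl hxe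
  refine ⟨b, ?_⟩
  rw [hb, mul_assoc, single_mul_single, ← map_mul, inv_mul_cancel, map_one, mul_one, ← one_def,
    mul_one]

end SemidirectProduct

theorem commSubgroupE_le_ker {P E Q : Type*} [Group P] [Group E] [Group Q] {φ : E →* MulAut P}
    (χ : P →* Q) (hχ : ∀ e u, χ (φ e u) = χ u) : commSubgroupE φ ≤ χ.ker :=
  (Subgroup.closure_le _).mpr <| by
    rintro _ ⟨e, u, rfl⟩
    simp [hχ]

section LeibnizCharacter

variable {k : Type*} [CommRing k] {G : Type*} [Group G] {B : Type*} [Ring B] [Algebra k B]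
  (ι : MonoidAlgebra k G →ₐ[k] B) (ψ : B →ₐ[k] k) (hψ : ∀ g, ψ (ι (of k G g)) = 1)
  (D : MonoidAlgebra k G →ₗ[k] B) (hD : ∀ a b, D (a * b) = D a * ι b + ι a * D b)

noncomputable def leibnizChar : G →* Multiplicative k :=
  MonoidHom.mk' (fun g => .ofAdd (ψ (D (of k G g)))) fun g h => by
    rw [← ofAdd_add, map_mul, hD, map_add, map_mul, map_mul, hψ, hψ, mul_one, one_mul]

theorem leibnizChar_apply (g : G) :
    leibnizChar ι ψ hψ D hD g = .ofAdd (ψ (D (of k G g))) :=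
  rfl

theorem apply_eq_zero_of_leibnizChar_eq_one (hχ : leibnizChar ι ψ hψ D hD = 1)
    (a : MonoidAlgebra k G) : ψ (D a) = 0 := by
  induction a using MonoidAlgebra.induction_linear with
  | zero => simp
  | add a b ha hb => rw [map_add, map_add, ha, hb, add_zero]
  | single g c =>
    have hg : ψ (D (of k G g)) = 0 := by
      simpa [leibnizChar_apply] using DFunLike.congr_fun hχ g
    rw [← mul_one c, ← smul_single', map_smul, map_smul, ← of_apply, hg, smul_zero]

end LeibnizCharacter

open SemidirectProduct in
theorem range_le_map_jacRad_of_leibniz {k : Type*} [CommRing k] {p : ℕ} [Fact p.Prime]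
    [CharP k p] {P E : Type*} [Group P] [Finite P] (hP : IsPGroup p P) [Group E]
    {φ : E →* MulAut P} (hPE : commSubgroupE φ = ⊤) {e : E}
    (f : MonoidAlgebra k P →ₗ[k] MonoidAlgebra k (P ⋊[φ] E))
    (hder : ∀ a b, f (a * b) = f a * iotaP k φ b + iotaP k φ a * f b)
    (hrange : LinearMap.range f ≤ kPe k φ e)
    (hstab : ∀ e' a, f (domCongr k k (φ e') a) = conjE k φ e' (f a)) :
    LinearMap.range f ≤ Submodule.map (LinearMap.mulRight k (single (inr e) 1))
      ((jacRad k (MonoidAlgebra k P)).map (iotaP k φ).toLinearMap) := by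
  let ψ := MonoidAlgebra.lift k k (P ⋊[φ] E) 1
  have hψι : ∀ b, ψ (iotaP k φ b) = MonoidAlgebra.lift k k P 1 b := by
    refine DFunLike.congr_fun (f := ψ.comp (iotaP k φ)) ?_
    ext u
    simp [ψ]
  have hψσ : ∀ e' : E, ψ (single (inr e') 1) = 1 := by simp [ψ]
  let χ := leibnizChar (iotaP k φ) ψ (fun u => by rw [hψι, lift_of]; rfl) f hder
  have hχ : χ = 1 := by
    refine MonoidHom.ext fun u =>
      commSubgroupE_le_ker χ (fun e' u => ?_) (hPE ▸ Subgroup.mem_top u)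
    rw [leibnizChar_apply, leibnizChar_apply]
    congr 1
    rw [of_apply, of_apply, ← domCongr_single (R := k) (A := k), hstab, conjE, map_mul, map_mul,
      hψσ, hψσ, one_mul, mul_one]
  rintro _ ⟨a, rfl⟩
  obtain ⟨b, hb⟩ := exists_eq_iotaP_mul_of_mem_kPe (hrange ⟨a, rfl⟩)
  refine ⟨iotaP k φ b, ⟨b, mem_jacobson_of_lift_one_eq_zero hP ?_, rfl⟩, hb.symm⟩
  calc MonoidAlgebra.lift k k P 1 b = ψ (iotaP k φ b * single (inr e) 1) := by
        rw [map_mul, hψι, hψσ, mul_one]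
    _ = 0 := by rw [← hb, apply_eq_zero_of_leibnizChar_eq_one _ _ _ _ _ hχ]

theorem stmt6_general (k : Type*) [Field k] (p : ℕ) [Fact p.Prime] [CharP k p]
    (P : Type*) [Group P] [Fintype P] (hP : IsPGroup p P)
    (E : Type*) [Group E]
    (φ : E →* MulAut P) (hPE : commSubgroupE φ = ⊤)
    (e : E) (he : e ∈ Subgroup.center E) :
    -- `kP·e` is a `kP`-`kP`-sub-bimodule of `k(P⋊E)`
    (∀ (a : MonoidAlgebra k P) (x : MonoidAlgebra k (P ⋊[φ] E)), x ∈ kPe k φ e →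
      iotaP k φ a * x ∈ kPe k φ e ∧ x * iotaP k φ a ∈ kPe k φ e) ∧
    -- `kP·e` is `E`-stable
    (∀ (e' : E) (x : MonoidAlgebra k (P ⋊[φ] E)), x ∈ kPe k φ e →
      conjE k φ e' x ∈ kPe k φ e) ∧
    -- `kP·e` is a direct summand of `k(P⋊E)` as a `kP`-`kP`-bimodule
    (∃ T : Submodule k (MonoidAlgebra k (P ⋊[φ] E)),
      (∀ (a : MonoidAlgebra k P) (x : MonoidAlgebra k (P ⋊[φ] E)), x ∈ T →
        iotaP k φ a * x ∈ T ∧ x * iotaP k φ a ∈ T) ∧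
      IsCompl (kPe k φ e) T) ∧
    -- every `E`-stable derivation `kP → kP·e` has image in `J(kP)·e`
    (∀ f : MonoidAlgebra k P →ₗ[k] MonoidAlgebra k (P ⋊[φ] E),
      (∀ a b : MonoidAlgebra k P, f (a * b) = f a * iotaP k φ b + iotaP k φ a * f b) →
      LinearMap.range f ≤ kPe k φ e →
      (∀ (e' : E) (a : MonoidAlgebra k P),
        f (MonoidAlgebra.domCongr k k (φ e') a) = conjE k φ e' (f a)) →
      LinearMap.range f ≤ Submodule.map
        (LinearMap.mulRight k (MonoidAlgebra.single ((SemidirectProduct.inr e : P ⋊[φ] E)) 1))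
        ((jacRad k (MonoidAlgebra k P)).map (iotaP k φ).toLinearMap)) :=
  ⟨fun a x hx => by
    rw [kPe_eq_supported] at hx ⊢
    exact iotaP_mul_mem_and_mul_iotaP_mem_supported {e} a hx,
  fun e' x hx => conjE_mem_kPe he e' hx,
  ⟨supported k k (SemidirectProduct.rightHom ⁻¹' {e})ᶜ,
    fun a x hx => iotaP_mul_mem_and_mul_iotaP_mem_supported {e}ᶜ a hx,
    kPe_eq_supported (k := k) (φ := φ) e ▸ isCompl_supported_compl _⟩,
  fun f hder hrange hstab => range_le_map_jacRad_of_leibniz hP hPE f hder hrange hstab⟩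

/-- Let `P` be a finite `p`-group, `E` a finite `p'`-group acting on `P` with
`[P,E] = P`, and `e ∈ Z(E)`. Then `kP·e ⊆ k(P⋊E)` is an `E`-stable `kP`-`kP`-sub-bimodule
which is a direct summand of `k(P⋊E)` as a `kP`-`kP`-bimodule, and every `E`-stable map
`f : kP → kP·e` satisfying the Leibniz rule has image contained in `J(kP)·e`. -/
theorem stmt6 (k : Type*) [Field k] (p : ℕ) [Fact p.Prime] [CharP k p]
    (P : Type*) [Group P] [Fintype P] (hP : IsPGroup p P)
    (E : Type*) [Group E] [Fintype E] (hE : ¬ p ∣ Fintype.card E)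
    (φ : E →* MulAut P) (hPE : commSubgroupE φ = ⊤)
    (e : E) (he : e ∈ Subgroup.center E) :
    -- `kP·e` is a `kP`-`kP`-sub-bimodule of `k(P⋊E)`
    (∀ (a : MonoidAlgebra k P) (x : MonoidAlgebra k (P ⋊[φ] E)), x ∈ kPe k φ e →
      iotaP k φ a * x ∈ kPe k φ e ∧ x * iotaP k φ a ∈ kPe k φ e) ∧
    -- `kP·e` is `E`-stable
    (∀ (e' : E) (x : MonoidAlgebra k (P ⋊[φ] E)), x ∈ kPe k φ e →
      conjE k φ e' x ∈ kPe k φ e) ∧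
    -- `kP·e` is a direct summand of `k(P⋊E)` as a `kP`-`kP`-bimodule
    (∃ T : Submodule k (MonoidAlgebra k (P ⋊[φ] E)),
      (∀ (a : MonoidAlgebra k P) (x : MonoidAlgebra k (P ⋊[φ] E)), x ∈ T →
        iotaP k φ a * x ∈ T ∧ x * iotaP k φ a ∈ T) ∧
      IsCompl (kPe k φ e) T) ∧
    -- every `E`-stable derivation `kP → kP·e` has image in `J(kP)·e`
    (∀ f : MonoidAlgebra k P →ₗ[k] MonoidAlgebra k (P ⋊[φ] E),
      (∀ a b : MonoidAlgebra k P, f (a * b) = f a * iotaP k φ b + iotaP k φ a * f b) →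
      LinearMap.range f ≤ kPe k φ e →
      (∀ (e' : E) (a : MonoidAlgebra k P),
        f (MonoidAlgebra.domCongr k k (φ e') a) = conjE k φ e' (f a)) →
      LinearMap.range f ≤ Submodule.map
        (LinearMap.mulRight k (MonoidAlgebra.single ((SemidirectProduct.inr e : P ⋊[φ] E)) 1))
        ((jacRad k (MonoidAlgebra k P)).map (iotaP k φ).toLinearMap)) :=
  stmt6_general k p P hP E φ hPE e he

end HHPaper
end

section
/- Let k be a field and A a finite-dimensional associative unital k-algebra. For m ≥ 1 let Der_m(A) denote the space of derivations on A with image contained in J(A)^m. Then: (i) for all positive integers m, n, [Der_m(A), Der_n(A)] ⊆ Der_{m+n−1}(A); (ii) Der_1(A) is a Lie subalgebra of Der(A), and for every positive integer m, Der_m(A) is a Lie ideal in Der_1(A); (iii) Der_2(A) is a nilpotent ideal in Der_1(A): if ℓℓ(A) ≤ 2 then Der_2(A) = 0, and if ℓℓ(A) > 2 then the nilpotency class of Der_2(A) is at most ℓℓ(A) − 2. -/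
namespace HHPaper

attribute [local instance 100] LieRing.ofAssociativeRing

open MonoidAlgebra

/-!
By the Leibniz rule a derivation with image in `J^m` maps `J^n` into `J^(m+n-1)`, so the bracket
of `Der_m` and `Der_n` lies in `Der_(m+n-1)`. Iterating, the `i`-th term of the lower central
series of `Der_2` consists of derivations with image in `J^(i+2)`, and these vanish once
`i + 2 ≥ ℓℓ(A)`; `J(A)` is nilpotent since a finite-dimensional algebra is artinian.
-/

section RadicalFiltration

variable {k A : Type*} [CommRing k] [Ring A] [Algebra k A]

lemma IsDerivation.apply_mem_pow {f : Module.End k A} (hf : IsDerivation f) {I : Submodule k A}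
    {m : ℕ} (hfI : LinearMap.range f ≤ I ^ m) :
    ∀ n : ℕ, ∀ a ∈ I ^ (n + 1), f a ∈ I ^ (m + n)
  | 0, a, ha => hfI ⟨a, rfl⟩
  | n + 1, _, ha => by
    rw [pow_succ] at ha
    refine Submodule.mul_induction_on ha (fun a ha b hb => ?_) (fun x y hx hy => ?_)
    · rw [hf a b]
      refine add_mem ?_ ?_
      · rw [← add_assoc, pow_succ]
        exact Submodule.mul_mem_mul (hf.apply_mem_pow hfI n a ha) hb
      · rw [show m + (n + 1) = n + 1 + m by omega, pow_add]
        exact Submodule.mul_mem_mul ha (hfI ⟨b, rfl⟩)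
    · rw [map_add]
      exact add_mem hx hy

lemma IsDerivation.range_lie_le {f g : Module.End k A} (hf : IsDerivation f)
    (hg : IsDerivation g) {I : Submodule k A} {m n : ℕ} (hfI : LinearMap.range f ≤ I ^ (m + 1))
    (hgI : LinearMap.range g ≤ I ^ (n + 1)) :
    LinearMap.range ⁅f, g⁆ ≤ I ^ (m + n + 1) := by
  rintro _ ⟨a, rfl⟩
  rw [Ring.lie_def, LinearMap.sub_apply, Module.End.mul_apply, Module.End.mul_apply]
  refine sub_mem ?_ ?_
  · rw [show m + n + 1 = m + 1 + n by omega]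
    exact hf.apply_mem_pow hfI n _ (hgI ⟨a, rfl⟩)
  · rw [show m + n + 1 = n + 1 + m by omega]
    exact hg.apply_mem_pow hgI m _ (hfI ⟨a, rfl⟩)

lemma lie_mem_derivRadLie {f g : Module.End k A} {m n : ℕ} (hf : f ∈ derivRadLie k A (m + 1))
    (hg : g ∈ derivRadLie k A (n + 1)) : ⁅f, g⁆ ∈ derivRadLie k A (m + n + 1) :=
  ⟨hf.1.lie hg.1, hf.1.range_lie_le hg.1 hf.2 hg.2⟩

lemma coe_mem_derivRadLie_of_mem_lowerCentralSeries {m : ℕ} :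
    ∀ {i : ℕ} {x : derivRadLie k A (m + 1)},
      x ∈ LieModule.lowerCentralSeries k (derivRadLie k A (m + 1)) (derivRadLie k A (m + 1)) i →
      (x : Module.End k A) ∈ derivRadLie k A (m * (i + 1) + 1)
  | 0, x, _ => by simp [x.2]
  | i + 1, x, hx => by
    rw [LieModule.lowerCentralSeries_succ, ← LieSubmodule.mem_toSubmodule,
      LieSubmodule.lieIdeal_oper_eq_linear_span'] at hx
    refine Submodule.span_induction (fun _ ⟨u, _, v, hv, huv⟩ => ?_)
      (zero_mem _) (fun _ _ _ _ => add_mem) (fun c _ _ => LieSubalgebra.smul_mem _ c) hx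
    rw [← huv, LieSubalgebra.coe_bracket, show m * (i + 1 + 1) = m + m * (i + 1) by ring]
    exact lie_mem_derivRadLie u.2 (coe_mem_derivRadLie_of_mem_lowerCentralSeries hv)

lemma derivRadLie_eq_bot {m : ℕ} (h : jacRad k A ^ m = ⊥) : derivRadLie k A m = ⊥ := by
  refine eq_bot_iff.mpr fun f hf => ?_
  rw [LieSubalgebra.mem_bot, ← LinearMap.range_eq_bot, eq_bot_iff, ← h]
  exact hf.2

end RadicalFiltration

section LoewyLength

variable {k A : Type*} [Field k] [Ring A] [Algebra k A] [FiniteDimensional k A]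

lemma exists_jacRad_pow_eq_bot : ∃ n, 0 < n ∧ jacRad k A ^ n = ⊥ := by
  have : IsArtinianRing A := .of_finite k A
  obtain ⟨n, hn⟩ := IsArtinianRing.isNilpotent_jacobson_bot (R := A)
  refine ⟨n + 1, n.succ_pos, ?_⟩
  rw [jacRad, ← Submodule.restrictScalars_pow n.add_one_ne_zero, Submodule.pow_succ, hn, zero_mul]
  rfl

lemma jacRad_pow_eq_bot_of_loewyLength_le {n : ℕ} (h : loewyLength k A ≤ n) :
    jacRad k A ^ n = ⊥ := by
  have hℓ : jacRad k A ^ loewyLength k A = ⊥ := (Nat.sInf_mem exists_jacRad_pow_eq_bot).2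
  rw [← Nat.add_sub_cancel' h, pow_add, hℓ, Submodule.bot_mul]

variable (k A) in
lemma lowerCentralSeries_derivRadLie_two_eq_bot :
    LieModule.lowerCentralSeries k (derivRadLie k A 2) (derivRadLie k A 2)
      (loewyLength k A - 2) = ⊥ := by
  refine (LieSubmodule.eq_bot_iff _).mpr fun x hx => ?_
  have hx' := coe_mem_derivRadLie_of_mem_lowerCentralSeries (m := 1) hx
  rw [derivRadLie_eq_bot (jacRad_pow_eq_bot_of_loewyLength_le (by omega))] at hx'
  exact Subtype.ext hx'

end LoewyLength

/-- For a finite-dimensional algebra `A`, with `Der_m(A)` the derivations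
with image in `J(A)^m`: (i) `[Der_m, Der_n] ⊆ Der_{m+n-1}`; (ii) `Der_1` is a Lie subalgebra
and each `Der_m` is a Lie ideal in `Der_1`; (iii) `Der_2` is a nilpotent ideal in `Der_1`:
if `ℓℓ(A) ≤ 2` then `Der_2 = 0`, and if `ℓℓ(A) > 2` its nilpotency class is at most
`ℓℓ(A) - 2`. -/
theorem stmt16 (k A : Type*) [Field k] [Ring A] [Algebra k A] [FiniteDimensional k A] :
    -- (i)
    (∀ m n : ℕ, 1 ≤ m → 1 ≤ n →
      ∀ f g : Module.End k A, f ∈ derivRadLie k A m → g ∈ derivRadLie k A n →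
        ⁅f, g⁆ ∈ derivRadLie k A (m + n - 1)) ∧
    -- (ii) : `Der_1` is a Lie subalgebra of `Der(A)` ...
    (∀ f g : Module.End k A, f ∈ derivRadLie k A 1 → g ∈ derivRadLie k A 1 →
        ⁅f, g⁆ ∈ derivRadLie k A 1) ∧
    -- ... and `Der_m` is a Lie ideal in `Der_1` for every positive `m`
    (∀ m : ℕ, 1 ≤ m →
      ∀ f g : Module.End k A, f ∈ derivRadLie k A 1 → g ∈ derivRadLie k A m →
        ⁅f, g⁆ ∈ derivRadLie k A m) ∧
    -- (iii) : `Der_2` is a nilpotent ideal in `Der_1`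
    (LieRing.IsNilpotent (derivRadLie k A 2)) ∧
    (loewyLength k A ≤ 2 → derivRadLie k A 2 = ⊥) ∧
    (2 < loewyLength k A →
      LieModule.lowerCentralSeries k ↥(derivRadLie k A 2) ↥(derivRadLie k A 2) (loewyLength k A - 2) = ⊥) := by
  have hDer : ∀ m n : ℕ, 1 ≤ m → 1 ≤ n → ∀ f g : Module.End k A, f ∈ derivRadLie k A m →
      g ∈ derivRadLie k A n → ⁅f, g⁆ ∈ derivRadLie k A (m + n - 1) := by
    intro m n hm hn f g hf hg
    obtain ⟨m, rfl⟩ := Nat.exists_eq_add_of_le' hm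
    obtain ⟨n, rfl⟩ := Nat.exists_eq_add_of_le' hn
    convert lie_mem_derivRadLie hf hg using 2
    omega
  have hLCS := lowerCentralSeries_derivRadLie_two_eq_bot k A
  refine ⟨hDer, fun f g => hDer 1 1 le_rfl le_rfl f g, fun m hm f g hf hg => ?_,
    .mk _ hLCS, fun h => derivRadLie_eq_bot (jacRad_pow_eq_bot_of_loewyLength_le h), fun _ => hLCS⟩
  simpa using hDer 1 m le_rfl hm f g hf hg

end HHPaper
end
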